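/- Let ν > 0 be real, put k_ν = ⌊ν/2 − 1/2⌋ and μ̃ = ν − 2k_ν − 2 (so −1 ≤ μ̃ < 1), and define for z in the cut plane ℂ ∖ (−∞,0] (principal powers) the finite sum p_ν(z) = (1/π) Σ_{k=0}^{k_ν} Γ(k + 1/2) (z/2)^{ν−2k−1} / Γ(ν + 1/2 − k), where an empty sum is 0. Then p_ν satisfies the modified Lommel equation p_ν''(z) + p_ν'(z)/z + (1 − ν²/z²) p_ν(z) = (z/2)^{ν−1}/(√π Γ(ν + 1/2)) − Γ(k_ν + 3/2) (z/2)^{μ̃−1}/(π Γ(ν − k_ν − 1/2)) for all z ∈ ℂ ∖ (−∞,0]. -/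

import Mathlib

/-- `k_ν = ⌊ν/2 - 1/2⌋`. -/
noncomputable def kIdx (ν : ℝ) : ℤ := ⌊ν / 2 - 1 / 2⌋

/-- `μ̃ = ν - 2 k_ν - 2`, so `-1 ≤ μ̃ < 1`. -/
noncomputable def muTilde (ν : ℝ) : ℝ := ν - 2 * (kIdx ν : ℝ) - 2

/-- The finite sum `p_ν(z) = (1/π) Σ_{k=0}^{k_ν} Γ(k+1/2) (z/2)^(ν-2k-1) / Γ(ν+1/2-k)`
(principal powers; empty sum is `0`). -/
noncomputable def pStruve (ν : ℝ) (z : ℂ) : ℂ :=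
  (1 / (Real.pi : ℂ)) * ∑ k ∈ Finset.range (kIdx ν + 1).toNat,
    Complex.Gamma ((k : ℂ) + 1 / 2) * (z / 2) ^ ((ν : ℂ) - 2 * (k : ℂ) - 1) /
      Complex.Gamma ((ν : ℂ) + 1 / 2 - (k : ℂ))

/- ---------- auxiliary material ---------- -/

noncomputable def lommelC (ν : ℝ) (k : ℕ) : ℂ :=
  Complex.Gamma ((k : ℂ) + 1 / 2) / Complex.Gamma ((ν : ℂ) + 1 / 2 - (k : ℂ))

noncomputable def lommelA (ν : ℝ) (k : ℕ) : ℂ := (ν : ℂ) - 2 * (k : ℂ) - 1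

lemma half_mem_slitPlane' {z : ℂ} (hz : z ∈ Complex.slitPlane) : z / 2 ∈ Complex.slitPlane := by
  rw [Complex.mem_slitPlane_iff] at hz ⊢
  have h2 : ((2:ℂ)) = ((2:ℝ):ℂ) := by norm_num
  rw [h2, Complex.div_ofReal_re, Complex.div_ofReal_im]
  rcases hz with h | h
  · left; positivity
  · right; simpa using h

lemma hasDerivAt_cpow_half' (α : ℂ) {z : ℂ} (hz : z ∈ Complex.slitPlane) :
    HasDerivAt (fun w : ℂ => (w / 2) ^ α) (α / 2 * (z / 2) ^ (α - 1)) z := by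
  have h := ((hasDerivAt_id z).div_const 2).cpow_const (c := α) (half_mem_slitPlane' hz)
  simp only [id_eq] at h
  convert h using 1
  ring

lemma hasDerivAt_lommelSum (n : ℕ) (c a : ℕ → ℂ) {z : ℂ} (hz : z ∈ Complex.slitPlane) :
    HasDerivAt (fun w => (1 / (Real.pi : ℂ)) * ∑ k ∈ Finset.range n, c k * (w / 2) ^ (a k))
      ((1 / (Real.pi : ℂ)) * ∑ k ∈ Finset.range n, c k * (a k / 2) * (z / 2) ^ (a k - 1)) z := by
  refine HasDerivAt.const_mul _ ?_
  have h := HasDerivAt.fun_sum (u := Finset.range n)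
    (A := fun k w => c k * (w / 2) ^ (a k))
    (A' := fun k => c k * (a k / 2 * (z / 2) ^ (a k - 1)))
    (fun k _ => (hasDerivAt_cpow_half' (a k) hz).const_mul (c k))
  convert h using 1
  · rfl
  exact Finset.sum_congr rfl fun k _ => by ring

set_option maxHeartbeats 1000000 in
lemma lommel_term (ν : ℝ) (k : ℕ) (hk : 2 * (k : ℝ) + 1 ≤ ν) {z : ℂ} (hz : z ≠ 0) :
    lommelC ν k * (lommelA ν k / 2) * ((lommelA ν k - 1) / 2) * (z / 2) ^ (lommelA ν k - 1 - 1)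
      + lommelC ν k * (lommelA ν k / 2) * (z / 2) ^ (lommelA ν k - 1) / z
      + (1 - (ν : ℂ) ^ 2 / z ^ 2) * (lommelC ν k * (z / 2) ^ (lommelA ν k))
    = lommelC ν k * (z / 2) ^ (lommelA ν k)
      - lommelC ν (k + 1) * (z / 2) ^ (lommelA ν (k + 1)) := by
  have hz2 : z / 2 ≠ 0 := by simpa using hz
  have hd : ((ν : ℂ) - 1 / 2 - (k : ℂ)) = ((ν - 1 / 2 - (k : ℝ) : ℝ) : ℂ) := by push_cast; ring
  have hdpos : (0:ℝ) < ν - 1 / 2 - (k : ℝ) := by linarith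
  have hdne : ((ν : ℂ) - 1 / 2 - (k : ℂ)) ≠ 0 := by
    rw [hd]; exact_mod_cast hdpos.ne'
  have hg2ne : Complex.Gamma ((ν : ℂ) - 1 / 2 - (k : ℂ)) ≠ 0 := by
    rw [hd]; exact Complex.Gamma_ne_zero_of_re_pos (by simpa using hdpos)
  have hkne : ((k : ℂ) + 1 / 2) ≠ 0 := by
    have : ((k : ℂ) + 1 / 2) = (((k : ℝ) + 1 / 2 : ℝ) : ℂ) := by push_cast; ring
    rw [this]; exact_mod_cast (by positivity : (0:ℝ) < (k:ℝ) + 1/2).ne'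
  have hgrec1 : Complex.Gamma (((k + 1 : ℕ) : ℂ) + 1 / 2)
      = ((k : ℂ) + 1 / 2) * Complex.Gamma ((k : ℂ) + 1 / 2) := by
    have h1 : (((k + 1 : ℕ)) : ℂ) + 1 / 2 = ((k : ℂ) + 1 / 2) + 1 := by push_cast; ring
    rw [h1, Complex.Gamma_add_one _ hkne]
  have hgrec2 : Complex.Gamma ((ν : ℂ) + 1 / 2 - (k : ℂ))
      = ((ν : ℂ) - 1 / 2 - (k : ℂ)) * Complex.Gamma ((ν : ℂ) - 1 / 2 - (k : ℂ)) := by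
    have h1 : (ν : ℂ) + 1 / 2 - (k : ℂ) = ((ν : ℂ) - 1 / 2 - (k : ℂ)) + 1 := by ring
    rw [h1, Complex.Gamma_add_one _ hdne]
  have hgarg : ((ν : ℂ) + 1 / 2 - ((k + 1 : ℕ) : ℂ)) = (ν : ℂ) - 1 / 2 - (k : ℂ) := by
    push_cast; ring
  have e1 : (z / 2) ^ (lommelA ν k - 1) = (z / 2) ^ (lommelA ν k - 1 - 1) * (z / 2) := by
    rw [show lommelA ν k - 1 = (lommelA ν k - 1 - 1) + 1 by ring,
      Complex.cpow_add _ _ hz2, Complex.cpow_one]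
    norm_num
  have e0 : (z / 2) ^ (lommelA ν k)
      = (z / 2) ^ (lommelA ν k - 1 - 1) * (z / 2) * (z / 2) := by
    rw [show lommelA ν k = (lommelA ν k - 1 - 1) + 1 + 1 by ring,
      Complex.cpow_add _ _ hz2, Complex.cpow_add _ _ hz2, Complex.cpow_one]
    norm_num
  have e2 : (z / 2) ^ (lommelA ν (k + 1)) = (z / 2) ^ (lommelA ν k - 1 - 1) := by
    congr 1; unfold lommelA; push_cast; ring
  rw [e1, e0, e2]
  unfold lommelC lommelA
  rw [hgarg, hgrec1, hgrec2]
  have hGG : ((k:ℂ) + 1/2) * Complex.Gamma ((k:ℂ) + 1/2) /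
      Complex.Gamma ((ν:ℂ) - 1/2 - (k:ℂ))
      = Complex.Gamma ((k:ℂ) + 1/2) /
          (((ν:ℂ) - 1/2 - (k:ℂ)) * Complex.Gamma ((ν:ℂ) - 1/2 - (k:ℂ))) *
        (((k:ℂ) + 1/2) * ((ν:ℂ) - 1/2 - (k:ℂ))) := by
    rw [div_mul_eq_mul_div, div_eq_div_iff hg2ne (mul_ne_zero hdne hg2ne)]
    ring
  rw [hGG]
  generalize Complex.Gamma ((k:ℂ) + 1/2) /
      (((ν:ℂ) - 1/2 - (k:ℂ)) * Complex.Gamma ((ν:ℂ) - 1/2 - (k:ℂ))) = c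
  generalize (z/2) ^ ((ν:ℂ) - 2*(k:ℂ) - 1 - 1 - 1) = w
  field_simp
  ring

lemma pStruve_eq (ν : ℝ) (w : ℂ) :
    pStruve ν w = (1 / (Real.pi : ℂ)) * ∑ k ∈ Finset.range (kIdx ν + 1).toNat,
      lommelC ν k * (w / 2) ^ (lommelA ν k) := by
  unfold pStruve lommelC lommelA
  congr 1
  exact Finset.sum_congr rfl fun k _ => by rw [mul_div_right_comm]

noncomputable def lommelD1 (ν : ℝ) (z : ℂ) : ℂ :=
  (1 / (Real.pi : ℂ)) * ∑ k ∈ Finset.range (kIdx ν + 1).toNat,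
    lommelC ν k * (lommelA ν k / 2) * (z / 2) ^ (lommelA ν k - 1)

noncomputable def lommelD2 (ν : ℝ) (z : ℂ) : ℂ :=
  (1 / (Real.pi : ℂ)) * ∑ k ∈ Finset.range (kIdx ν + 1).toNat,
    lommelC ν k * (lommelA ν k / 2) * ((lommelA ν k - 1) / 2) * (z / 2) ^ (lommelA ν k - 1 - 1)

lemma hasDerivAt_pStruve (ν : ℝ) {z : ℂ} (hz : z ∈ Complex.slitPlane) :
    HasDerivAt (pStruve ν) (lommelD1 ν z) z := by
  have h := hasDerivAt_lommelSum ((kIdx ν + 1).toNat) (lommelC ν) (lommelA ν) hz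
  have hfun : pStruve ν = fun w => (1 / (Real.pi : ℂ)) *
      ∑ k ∈ Finset.range (kIdx ν + 1).toNat, lommelC ν k * (w / 2) ^ (lommelA ν k) :=
    funext (pStruve_eq ν)
  rw [hfun]
  exact h

lemma hasDerivAt_lommelD1 (ν : ℝ) {z : ℂ} (hz : z ∈ Complex.slitPlane) :
    HasDerivAt (lommelD1 ν) (lommelD2 ν z) z := by
  have h := hasDerivAt_lommelSum ((kIdx ν + 1).toNat)
    (fun k => lommelC ν k * (lommelA ν k / 2)) (fun k => lommelA ν k - 1) hz
  have hD2 : lommelD2 ν z = (1 / (Real.pi : ℂ)) * ∑ k ∈ Finset.range (kIdx ν + 1).toNat,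
      (lommelC ν k * (lommelA ν k / 2)) * ((lommelA ν k - 1) / 2)
        * (z / 2) ^ (lommelA ν k - 1 - 1) := rfl
  rw [show lommelD1 ν = fun w => (1 / (Real.pi : ℂ)) *
      ∑ k ∈ Finset.range (kIdx ν + 1).toNat,
        (lommelC ν k * (lommelA ν k / 2)) * (w / 2) ^ (lommelA ν k - 1) from rfl, hD2]
  exact h

/-- `p_ν` satisfies the modified Lommel equation
`p_ν'' + p_ν'/z + (1 - ν²/z²) p_ν
  = (z/2)^(ν-1)/(√π Γ(ν+1/2)) - Γ(k_ν+3/2)(z/2)^(μ̃-1)/(π Γ(ν-k_ν-1/2))`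
on the cut plane `ℂ ∖ (-∞,0]`. -/
theorem pStruve_modified_lommel (ν : ℝ) (hν : 0 < ν) :
    ∀ z ∈ Complex.slitPlane,
      deriv (deriv (pStruve ν)) z + deriv (pStruve ν) z / z +
          (1 - (ν : ℂ) ^ 2 / z ^ 2) * pStruve ν z =
        (z / 2) ^ ((ν : ℂ) - 1) /
            (((Real.sqrt Real.pi : ℝ) : ℂ) * Complex.Gamma ((ν : ℂ) + 1 / 2)) -
          Complex.Gamma ((kIdx ν : ℂ) + 3 / 2) * (z / 2) ^ ((muTilde ν : ℂ) - 1) /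
            ((Real.pi : ℂ) * Complex.Gamma ((ν : ℂ) - (kIdx ν : ℂ) - 1 / 2)) := by
  intro z hz
  have hz0 : z ≠ 0 := Complex.slitPlane_ne_zero hz
  -- index bookkeeping
  set n : ℕ := (kIdx ν + 1).toNat with hn_def
  have hkfl : (kIdx ν : ℝ) ≤ ν / 2 - 1 / 2 := Int.floor_le _
  have hk1 : (-1 : ℤ) ≤ kIdx ν := by
    rw [kIdx, Int.le_floor]
    push_cast
    linarith
  have hnz : (n : ℤ) = kIdx ν + 1 := Int.toNat_of_nonneg (by omega)
  have hnr : ((n : ℝ)) = (kIdx ν : ℝ) + 1 := by exact_mod_cast hnz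
  -- rewrite the derivatives
  have hd1 : deriv (pStruve ν) z = lommelD1 ν z := (hasDerivAt_pStruve ν hz).deriv
  have hd2 : deriv (deriv (pStruve ν)) z = lommelD2 ν z := by
    have hev : deriv (pStruve ν) =ᶠ[nhds z] lommelD1 ν :=
      Filter.eventually_of_mem (Complex.isOpen_slitPlane.mem_nhds hz)
        (fun w hw => (hasDerivAt_pStruve ν hw).deriv)
    rw [hev.deriv_eq]
    exact (hasDerivAt_lommelD1 ν hz).deriv
  rw [hd1, hd2, pStruve_eq ν z]
  -- combine into one sum
  have hcomb : lommelD2 ν z + lommelD1 ν z / z +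
      (1 - (ν : ℂ) ^ 2 / z ^ 2) * ((1 / (Real.pi : ℂ)) * ∑ k ∈ Finset.range n,
        lommelC ν k * (z / 2) ^ (lommelA ν k)) =
      (1 / (Real.pi : ℂ)) * ∑ k ∈ Finset.range n,
        (lommelC ν k * (lommelA ν k / 2) * ((lommelA ν k - 1) / 2)
            * (z / 2) ^ (lommelA ν k - 1 - 1)
          + lommelC ν k * (lommelA ν k / 2) * (z / 2) ^ (lommelA ν k - 1) / z
          + (1 - (ν : ℂ) ^ 2 / z ^ 2) * (lommelC ν k * (z / 2) ^ (lommelA ν k))) := by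
    unfold lommelD1 lommelD2
    rw [Finset.sum_add_distrib, Finset.sum_add_distrib, ← Finset.sum_div, ← Finset.mul_sum]
    ring
  rw [hcomb]
  -- telescope
  have htel : ∑ k ∈ Finset.range n,
      (lommelC ν k * (lommelA ν k / 2) * ((lommelA ν k - 1) / 2)
          * (z / 2) ^ (lommelA ν k - 1 - 1)
        + lommelC ν k * (lommelA ν k / 2) * (z / 2) ^ (lommelA ν k - 1) / z
        + (1 - (ν : ℂ) ^ 2 / z ^ 2) * (lommelC ν k * (z / 2) ^ (lommelA ν k)))
      = lommelC ν 0 * (z / 2) ^ (lommelA ν 0) - lommelC ν n * (z / 2) ^ (lommelA ν n) := by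
    rw [← Finset.sum_range_sub' (fun k => lommelC ν k * (z / 2) ^ (lommelA ν k)) n]
    refine Finset.sum_congr rfl fun k hk => ?_
    have hkn : (k : ℤ) ≤ kIdx ν := by
      have := Finset.mem_range.mp hk
      omega
    have hkr : (k : ℝ) ≤ ν / 2 - 1 / 2 := le_trans (by exact_mod_cast hkn) hkfl
    exact lommel_term ν k (by linarith) hz0
  rw [htel]
  -- boundary terms
  have hsqpos : (0:ℝ) < Real.sqrt Real.pi := Real.sqrt_pos.mpr Real.pi_pos
  have hsqne : ((Real.sqrt Real.pi : ℝ) : ℂ) ≠ 0 := by exact_mod_cast hsqpos.ne'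
  have hpi : (Real.pi : ℂ) = ((Real.sqrt Real.pi : ℝ) : ℂ) * ((Real.sqrt Real.pi : ℝ) : ℂ) := by
    rw [← Complex.ofReal_mul, Real.mul_self_sqrt Real.pi_pos.le]
  have hG1arg : ((ν : ℂ) + 1 / 2 - ((0:ℕ) : ℂ)) = (ν : ℂ) + 1 / 2 := by push_cast; ring
  have hGnu : Complex.Gamma ((ν : ℂ) + 1 / 2) ≠ 0 := by
    have : ((ν : ℂ) + 1 / 2) = ((ν + 1/2 : ℝ) : ℂ) := by push_cast; ring
    rw [this]
    exact Complex.Gamma_ne_zero_of_re_pos (by simpa using by linarith)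
  have hGn : Complex.Gamma ((ν : ℂ) + 1 / 2 - ((n:ℕ) : ℂ)) ≠ 0 := by
    have : ((ν : ℂ) + 1 / 2 - ((n:ℕ) : ℂ)) = ((ν + 1/2 - n : ℝ) : ℂ) := by push_cast; ring
    rw [this]
    refine Complex.Gamma_ne_zero_of_re_pos (by simpa using by nlinarith [hnr, hkfl])
  have hGhalf : Complex.Gamma (((0:ℕ) : ℂ) + 1 / 2) = ((Real.sqrt Real.pi : ℝ) : ℂ) := by
    rw [show (((0:ℕ) : ℂ) + 1 / 2) = 1/2 by push_cast; ring, Complex.Gamma_one_half_eq,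
      Real.sqrt_eq_rpow, Complex.ofReal_cpow Real.pi_pos.le]
    norm_num
  -- match the right-hand side
  have hic : ((kIdx ν : ℤ) : ℂ) = ((n:ℕ) : ℂ) - 1 := by
    rw [show ((n:ℕ) : ℂ) = (((n:ℕ) : ℤ) : ℂ) by push_cast; ring, hnz]; push_cast; ring
  have eG1 : Complex.Gamma ((kIdx ν : ℂ) + 3 / 2) = Complex.Gamma (((n:ℕ) : ℂ) + 1 / 2) := by
    congr 1
    rw [hic]; ring
  have eG2 : Complex.Gamma ((ν : ℂ) - (kIdx ν : ℂ) - 1 / 2)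
      = Complex.Gamma ((ν : ℂ) + 1 / 2 - ((n:ℕ) : ℂ)) := by
    congr 1
    rw [hic]; ring
  have emu : ((muTilde ν : ℝ) : ℂ) - 1 = lommelA ν n := by
    unfold muTilde lommelA
    push_cast
    rw [hic]
    ring
  have ea0 : lommelA ν 0 = (ν : ℂ) - 1 := by unfold lommelA; push_cast; ring
  rw [eG1, eG2, emu, ea0]
  unfold lommelC
  rw [hG1arg, hGhalf, hpi]
  set s : ℂ := ((Real.sqrt Real.pi : ℝ) : ℂ) with hs_def
  set G1 : ℂ := Complex.Gamma ((ν : ℂ) + 1 / 2) with hG1_def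
  set G2 : ℂ := Complex.Gamma ((ν : ℂ) + 1 / 2 - ((n:ℕ) : ℂ)) with hG2_def
  set Gn : ℂ := Complex.Gamma (((n:ℕ) : ℂ) + 1 / 2) with hGn_def
  set X : ℂ := (z / 2) ^ ((ν : ℂ) - 1) with hX_def
  set Y : ℂ := (z / 2) ^ (lommelA ν n) with hY_def
  field_simp
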